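/- For positive integers k, l, m, n, the integral over [0, 2π] of sin(k·t)·sin(l·t)·cos(m·t)·cos(n·t) dt equals (π/4)·(δ(k−l−m−n) + δ(k−l+m−n) + δ(k−l−m+n) + δ(k−l+m+n) − δ(k+l−m−n) − δ(k+l+m−n) − δ(k+l−m+n)), where δ(x) = 1 if x = 0 and 0 otherwise. -/
import Mathlib
open Real intervalIntegral

lemma cos_int_integral (j : ℤ) :
    ∫ t in (0:ℝ)..(2*π), Real.cos (j*t) = if j = 0 then 2*π else 0 := by
  rcases eq_or_ne j 0 with h | h
  · simp [h, two_pi_pos.le]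
  · have hj : (j:ℝ) ≠ 0 := Int.cast_ne_zero.mpr h
    rw [if_neg h]
    rw [intervalIntegral.integral_comp_mul_left (a := (0:ℝ)) (b := 2*π)
      (c := (j:ℝ)) (f := Real.cos) hj, integral_cos]
    rw [show (j:ℝ) * (2*π) = ((2*j:ℤ):ℝ) * π by push_cast; ring, Real.sin_int_mul_pi]
    simp

lemma trig_id (a b c d : ℝ) : Real.sin a * Real.sin b * Real.cos c * Real.cos d =
    (Real.cos (a-b-c-d) + Real.cos (a-b+c-d) + Real.cos (a-b-c+d) + Real.cos (a-b+c+d)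
     - Real.cos (a+b-c-d) - Real.cos (a+b+c-d) - Real.cos (a+b-c+d) - Real.cos (a+b+c+d))/8 := by
  simp [Real.cos_add, Real.cos_sub, Real.sin_add, Real.sin_sub]; ring

theorem sin_sin_cos_cos_integral (k l m n : ℤ)
    (hk : 1 ≤ k) (hl : 1 ≤ l) (hm : 1 ≤ m) (hn : 1 ≤ n) :
    ∫ t in (0:ℝ)..(2 * π),
      Real.sin (k * t) * Real.sin (l * t) * Real.cos (m * t) * Real.cos (n * t) =
    (π / 4) * (((if k - l - m - n = 0 then 1 else 0) : ℝ)
      + (if k - l + m - n = 0 then 1 else 0)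
      + (if k - l - m + n = 0 then 1 else 0)
      + (if k - l + m + n = 0 then 1 else 0)
      - (if k + l - m - n = 0 then 1 else 0)
      - (if k + l + m - n = 0 then 1 else 0)
      - (if k + l - m + n = 0 then 1 else 0)) := by
  have I : ∀ j : ℤ, IntervalIntegrable (fun t => Real.cos ((j:ℝ)*t))
      MeasureTheory.volume 0 (2*π) := fun j =>
    (Real.continuous_cos.comp (continuous_const.mul continuous_id)).intervalIntegrable _ _
  have step : ∫ t in (0:ℝ)..(2 * π),
      Real.sin (k * t) * Real.sin (l * t) * Real.cos (m * t) * Real.cos (n * t) =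
      ∫ t in (0:ℝ)..(2 * π),
      (Real.cos (((k-l-m-n:ℤ):ℝ)*t) + Real.cos (((k-l+m-n:ℤ):ℝ)*t)
       + Real.cos (((k-l-m+n:ℤ):ℝ)*t) + Real.cos (((k-l+m+n:ℤ):ℝ)*t)
       - Real.cos (((k+l-m-n:ℤ):ℝ)*t) - Real.cos (((k+l+m-n:ℤ):ℝ)*t)
       - Real.cos (((k+l-m+n:ℤ):ℝ)*t) - Real.cos (((k+l+m+n:ℤ):ℝ)*t))/8 := by
    apply intervalIntegral.integral_congr
    intro t _
    push_cast
    rw [trig_id]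
    ring_nf
  rw [step, intervalIntegral.integral_div,
    intervalIntegral.integral_sub (((((((I _).add (I _)).add (I _)).add (I _)).sub (I _)).sub (I _)).sub (I _)) (I _),
    intervalIntegral.integral_sub ((((((I _).add (I _)).add (I _)).add (I _)).sub (I _)).sub (I _)) (I _),
    intervalIntegral.integral_sub (((((I _).add (I _)).add (I _)).add (I _)).sub (I _)) (I _),
    intervalIntegral.integral_sub ((((I _).add (I _)).add (I _)).add (I _)) (I _),
    intervalIntegral.integral_add (((I _).add (I _)).add (I _)) (I _),
    intervalIntegral.integral_add ((I _).add (I _)) (I _),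
    intervalIntegral.integral_add (I _) (I _)]
  simp only [cos_int_integral]
  rw [if_neg (by omega : ¬ k + l + m + n = 0)]
  split_ifs <;> ring
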